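/- arXiv:1803.07074 — 2 statements merged into one kernel-verified Lean document; each statement's English description precedes it below -/
import Mathlib

section
/- Let 0 < d < 1 and define g_i = d·Γ(i − d)/(Γ(1 − d)·Γ(i + 1)) for integers i ≥ 1, where Γ is the real Gamma function. Then the series Σ_{i=1}^∞ g_i converges and Σ_{i=1}^∞ g_i = 1. -/
open Filter Real

theorem stmt_11 (d : ℝ) (hd0 : 0 < d) (hd1 : d < 1) (g : ℕ → ℝ)
    (hg : ∀ i : ℕ, 1 ≤ i →
      g i = d * Real.Gamma (i - d) / (Real.Gamma (1 - d) * Real.Gamma (i + 1))) :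
    HasSum (fun i : ℕ => g (i + 1)) 1 := by
  have hd1' : 0 < 1 - d := by linarith
  have hΓd : 0 < Real.Gamma (1 - d) := Real.Gamma_pos_of_pos hd1'
  -- tail function
  set h : ℕ → ℝ := fun n => Real.Gamma (n + 1 - d) / (Real.Gamma (1 - d) * Real.Gamma (n + 1))
    with hh
  have hpos : ∀ n : ℕ, 0 < h n := by
    intro n
    apply div_pos (Real.Gamma_pos_of_pos (by have := Nat.cast_nonneg (α := ℝ) n; linarith))
    exact mul_pos hΓd (Real.Gamma_pos_of_pos (by positivity))
  have hg' : ∀ n : ℕ, g (n + 1) = h n - h (n + 1) := by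
    intro n
    have e1 : ((n + 1 : ℕ) : ℝ) = (n : ℝ) + 1 := by push_cast; ring
    rw [hg (n + 1) (by omega), hh]
    simp only [e1]
    have hΓ2 : Real.Gamma ((n : ℝ) + 1 + 1) = ((n : ℝ) + 1) * Real.Gamma ((n : ℝ) + 1) :=
      Real.Gamma_add_one (by positivity)
    have hΓ3 : Real.Gamma ((n : ℝ) + 1 + 1 - d) = ((n : ℝ) + 1 - d) * Real.Gamma ((n : ℝ) + 1 - d) := by
      have e2 : (n : ℝ) + 1 + 1 - d = ((n : ℝ) + 1 - d) + 1 := by ring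
      have e3 : (0:ℝ) < (n : ℝ) + 1 - d := by
        have := Nat.cast_nonneg (α := ℝ) n; linarith
      rw [e2, Real.Gamma_add_one e3.ne']
    rw [hΓ2, hΓ3]
    have hn1 : ((n : ℝ) + 1) ≠ 0 := by positivity
    have hΓn1 : Real.Gamma ((n : ℝ) + 1) ≠ 0 := (Real.Gamma_pos_of_pos (by positivity)).ne'
    field_simp
    ring
  have hsum : ∀ n : ℕ, ∑ i ∈ Finset.range n, g (i + 1) = 1 - h n := by
    intro n
    calc ∑ i ∈ Finset.range n, g (i + 1) = ∑ i ∈ Finset.range n, (h i - h (i + 1)) :=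
          Finset.sum_congr rfl fun i _ => hg' i
      _ = h 0 - h n := Finset.sum_range_sub' h n
      _ = 1 - h n := by
          have : h 0 = 1 := by
            simp only [hh, Nat.cast_zero, zero_add, Real.Gamma_one, mul_one]
            rw [div_self hΓd.ne']
          rw [this]
  -- h n → 0
  have hbound : ∀ n : ℕ, 1 ≤ n → h n ≤ (n : ℝ) ^ (-d) / Real.Gamma (1 - d) := by
    intro n hn
    have hn0 : (0 : ℝ) < n := by exact_mod_cast hn
    have hΓn : 0 < Real.Gamma (n : ℝ) := Real.Gamma_pos_of_pos hn0
    have hΓn1 : 0 < Real.Gamma ((n : ℝ) + 1) := Real.Gamma_pos_of_pos (by positivity)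
    have key : Real.Gamma ((n : ℝ) + 1 - d) ≤
        Real.Gamma (n : ℝ) ^ d * Real.Gamma ((n : ℝ) + 1) ^ (1 - d) := by
      have := Real.Gamma_mul_add_mul_le_rpow_Gamma_mul_rpow_Gamma hn0
        (show (0:ℝ) < (n:ℝ) + 1 by positivity) hd0 hd1' (by ring)
      convert this using 2
      ring
    have hΓrec : Real.Gamma ((n : ℝ) + 1) = (n : ℝ) * Real.Gamma (n : ℝ) :=
      Real.Gamma_add_one hn0.ne'
    have heq : Real.Gamma (n : ℝ) ^ d * Real.Gamma ((n : ℝ) + 1) ^ (1 - d)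
        = (n : ℝ) ^ (-d) * Real.Gamma ((n : ℝ) + 1) := by
      rw [hΓrec, Real.mul_rpow hn0.le hΓn.le]
      rw [show Real.Gamma (n:ℝ) ^ d * ((n:ℝ) ^ (1 - d) * Real.Gamma (n:ℝ) ^ (1 - d))
          = (n:ℝ) ^ (1 - d) * (Real.Gamma (n:ℝ) ^ d * Real.Gamma (n:ℝ) ^ (1 - d)) by ring,
        ← Real.rpow_add hΓn, show d + (1 - d) = 1 by ring, Real.rpow_one]
      rw [show (n:ℝ) ^ (-d) * ((n:ℝ) * Real.Gamma (n:ℝ))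
          = (n:ℝ) ^ (-d) * (n:ℝ) ^ (1:ℝ) * Real.Gamma (n:ℝ) by rw [Real.rpow_one]; ring,
        ← Real.rpow_add hn0, show -d + 1 = 1 - d by ring]
    calc h n = Real.Gamma ((n : ℝ) + 1 - d) / (Real.Gamma (1 - d) * Real.Gamma ((n:ℝ) + 1)) := rfl
      _ ≤ ((n : ℝ) ^ (-d) * Real.Gamma ((n:ℝ) + 1)) / (Real.Gamma (1 - d) * Real.Gamma ((n:ℝ) + 1)) := by
          apply div_le_div_of_nonneg_right (heq ▸ key) (by positivity) |>.trans_eq rfl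
      _ = (n : ℝ) ^ (-d) / Real.Gamma (1 - d) := by
          rw [mul_comm (Real.Gamma (1-d)), ← div_div, mul_div_assoc, div_self hΓn1.ne']
          ring
  have htend : Tendsto h atTop (nhds 0) := by
    have hub : Tendsto (fun n : ℕ => (n : ℝ) ^ (-d) / Real.Gamma (1 - d)) atTop (nhds 0) := by
      have := (tendsto_rpow_neg_atTop hd0).comp tendsto_natCast_atTop_atTop (α := ℕ)
      simpa using this.div_const (Real.Gamma (1 - d))
    refine tendsto_of_tendsto_of_tendsto_of_le_of_le' tendsto_const_nhds hub ?_ ?_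
    · exact Eventually.of_forall fun n => (hpos n).le
    · filter_upwards [eventually_ge_atTop 1] with n hn using hbound n hn
  have hnonneg : ∀ i : ℕ, 0 ≤ g (i + 1) := by
    intro i
    rw [hg (i + 1) (by omega)]
    have : (0:ℝ) < ((i + 1 : ℕ) : ℝ) - d := by push_cast; linarith
    have h1 := Real.Gamma_pos_of_pos this
    have h2 : (0:ℝ) < Real.Gamma (((i + 1 : ℕ) : ℝ) + 1) := Real.Gamma_pos_of_pos (by positivity)
    positivity
  rw [hasSum_iff_tendsto_nat_of_nonneg hnonneg]
  have : (fun n : ℕ => ∑ i ∈ Finset.range n, g (i + 1)) = fun n => 1 - h n := funext hsum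
  rw [this]
  simpa using tendsto_const_nhds.sub htend
end

section
/- Let 0 < d < 1, let δ be a real number, and define g_i = d·Γ(i − d)/(Γ(1 − d)·Γ(i + 1)) for integers i ≥ 1, where Γ is the real Gamma function. Then the series Σ_{i=2}^∞ (g_i − δ·g_{i−1}) converges and Σ_{i=2}^∞ (g_i − δ·g_{i−1}) = 1 − g_1 − δ. -/
open Real Filter Finset

theorem stmt_14 (d : ℝ) (hd0 : 0 < d) (hd1 : d < 1) (δ : ℝ) (g : ℕ → ℝ)
    (hg : ∀ i : ℕ, 1 ≤ i →
      g i = d * Real.Gamma (i - d) / (Real.Gamma (1 - d) * Real.Gamma (i + 1))) :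
    HasSum (fun i : ℕ => g (i + 2) - δ * g (i + 1)) (1 - g 1 - δ) := by
  set P : ℕ → ℝ := fun n => ∏ k ∈ Finset.range n, (1 - d / (k + 1)) with hPdef
  have hfac : ∀ k : ℕ, 0 < 1 - d / (k + 1) := by
    intro k
    have hk : (0:ℝ) < k + 1 := by positivity
    have h1 : d / ((k:ℝ) + 1) < 1 := by
      rw [div_lt_one hk]
      have : (0:ℝ) ≤ k := Nat.cast_nonneg k
      linarith
    linarith
  have hPpos : ∀ n, 0 < P n := fun n => Finset.prod_pos (fun k _ => hfac k)
  have hG1 : Real.Gamma (1 - d) ≠ 0 := (Real.Gamma_pos_of_pos (by linarith)).ne'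
  have hgP : ∀ n : ℕ, g (n + 1) = P n * (d / (n + 1)) := by
    intro n
    induction n with
    | zero =>
      rw [hg 1 le_rfl]
      norm_num [hPdef, Real.Gamma_two]
      field_simp
    | succ n ih =>
      have h1 : ((n:ℝ) + 1) - d ≠ 0 := by
        have : (0:ℝ) ≤ n := Nat.cast_nonneg n
        intro h; nlinarith
      have h2 : ((n:ℝ) + 1) + 1 ≠ 0 := by positivity
      have e1 : Real.Gamma (((n:ℕ)+2 : ℕ) - d) = (((n:ℝ)+1) - d) * Real.Gamma (((n:ℕ)+1 : ℕ) - d) := by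
        push_cast
        rw [show (n:ℝ) + 2 - d = ((n:ℝ) + 1 - d) + 1 by ring, Real.Gamma_add_one h1]
      have e2 : Real.Gamma ((((n:ℕ)+2 : ℕ) : ℝ) + 1) = (((n:ℝ)+1) + 1) * Real.Gamma ((((n:ℕ)+1 : ℕ) : ℝ) + 1) := by
        push_cast
        rw [show (n:ℝ) + 2 + 1 = ((n:ℝ) + 1 + 1) + 1 by ring, Real.Gamma_add_one (by positivity)]
      have hgam : Real.Gamma ((((n:ℕ)+1 : ℕ) : ℝ) + 1) ≠ 0 := by
        have : (0:ℝ) < ((n:ℕ)+1 : ℕ) + 1 := by positivity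
        exact (Real.Gamma_pos_of_pos this).ne'
      have step : g (n + 2) = g (n + 1) * ((((n:ℝ)+1) - d) / (((n:ℝ)+1) + 1)) := by
        rw [hg (n+2) (by omega), hg (n+1) (by omega), e1, e2]
        field_simp
      rw [step, ih, hPdef]
      simp only [Finset.prod_range_succ]
      push_cast
      field_simp
  have htel : ∀ n : ℕ, g (n + 1) = P n - P (n + 1) := by
    intro n
    rw [hgP n, hPdef]
    simp only [Finset.prod_range_succ]
    ring
  -- P tends to 0
  have hPle : ∀ n, P n ≤ Real.exp (-(d * ∑ k ∈ Finset.range n, 1 / ((k:ℝ) + 1))) := by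
    intro n
    have : P n ≤ ∏ k ∈ Finset.range n, Real.exp (-(d / ((k:ℝ) + 1))) := by
      apply Finset.prod_le_prod (fun k _ => (hfac k).le)
      intro k _
      have := Real.add_one_le_exp (-(d / ((k:ℝ) + 1)))
      linarith
    rw [← Real.exp_sum] at this
    refine le_trans this (le_of_eq ?_)
    congr 1
    rw [Finset.mul_sum, ← Finset.sum_neg_distrib]
    apply Finset.sum_congr rfl
    intro k _
    field_simp
  have hPto0 : Tendsto P atTop (nhds 0) := by
    have hS : Tendsto (fun n => ∑ k ∈ Finset.range n, 1 / ((k:ℝ) + 1)) atTop atTop := by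
      simpa using tendsto_sum_range_one_div_nat_succ_atTop
    have hexp : Tendsto (fun n => Real.exp (-(d * ∑ k ∈ Finset.range n, 1 / ((k:ℝ) + 1)))) atTop (nhds 0) := by
      apply Real.tendsto_exp_atBot.comp
      apply tendsto_neg_atTop_atBot.comp
      exact hS.const_mul_atTop hd0
    exact tendsto_of_tendsto_of_tendsto_of_le_of_le tendsto_const_nhds hexp
      (fun n => (hPpos n).le) hPle
  have h1 : HasSum (fun n => g (n + 1)) 1 := by
    rw [hasSum_iff_tendsto_nat_of_nonneg (fun n => by rw [hgP n]; exact mul_nonneg (hPpos n).le (by positivity))]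
    have : ∀ n, ∑ i ∈ Finset.range n, g (i + 1) = 1 - P n := by
      intro n
      calc ∑ i ∈ Finset.range n, g (i + 1) = ∑ i ∈ Finset.range n, (P i - P (i+1)) :=
            Finset.sum_congr rfl (fun i _ => htel i)
        _ = P 0 - P n := Finset.sum_range_sub' P n
        _ = 1 - P n := by simp [hPdef]
    simp only [this]
    simpa using (tendsto_const_nhds (x := (1:ℝ))).sub hPto0
  have h2 : HasSum (fun n : ℕ => g (n + 2)) (1 - g 1) := by
    have h1' : HasSum (fun n => g (n + 1)) ((1 - g 1) + ∑ i ∈ Finset.range 1, g (i + 1)) := by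
      simpa using h1
    exact (hasSum_nat_add_iff 1).2 h1'
  have h3 : HasSum (fun n : ℕ => δ * g (n + 1)) (δ * 1) := h1.mul_left δ
  have := h2.sub h3
  simpa using this
end
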